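/- arXiv:1407.8303 — 2 statements merged into one kernel-verified Lean document; each statement's English description precedes it below -/
import Mathlib

section
/- Let α, β ∈ ℝ be such that n + α + β ∉ {−1, −2, −3, …} for every integer n ≥ 1 (equivalently, α + β is not an integer ≤ −2). Then the Jacobi polynomials with real parameters satisfy the three-term recurrence: for every n ≥ 1 and every x ∈ ℝ, P_{n+1}^{(α,β)}(x) = (a_n x − b_n) P_n^{(α,β)}(x) − c_n P_{n−1}^{(α,β)}(x), where a_n = (2n+α+β+1)(2n+α+β+2) / (2(n+1)(n+α+β+1)), b_n = (β²−α²)(2n+α+β+1) / (2(n+1)(n+α+β+1)(2n+α+β)), and c_n = (n+α)(n+β)(2n+α+β+2) / ((n+1)(n+α+β+1)(2n+α+β)); moreover P_0^{(α,β)}(x) = 1 and P_1^{(α,β)}(x) = (α+β+2)x/2 + (α−β)/2. -/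
open MeasureTheory Filter Finset

/-- Jacobi polynomial with real parameters. -/
noncomputable def jacobiP (a b : ℝ) (n : ℕ) (x : ℝ) : ℝ :=
  ∑ j ∈ Finset.range (n + 1),
    ((ascPochhammer ℝ j).eval ((n : ℝ) + a + b + 1) / (Nat.factorial j : ℝ)) *
      ((ascPochhammer ℝ (n - j)).eval (a + (j : ℝ) + 1) / (Nat.factorial (n - j) : ℝ)) *
      ((x - 1) / 2) ^ j

/-- Right Riemann-Liouville fractional integral on (-1,1). -/
noncomputable def Iplus (ρ : ℝ) (v : ℝ → ℝ) (x : ℝ) : ℝ :=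
  (1 / Real.Gamma ρ) * ∫ y in x..1, (y - x) ^ (ρ - 1) * v y

/-- Left Riemann-Liouville fractional integral on (-1,1). -/
noncomputable def Iminus (ρ : ℝ) (v : ℝ → ℝ) (x : ℝ) : ℝ :=
  (1 / Real.Gamma ρ) * ∫ y in (-1 : ℝ)..x, (x - y) ^ (ρ - 1) * v y

/-- Right Riemann-Liouville fractional derivative of order `s ∈ [k-1,k)`. -/
noncomputable def Dplus (s : ℝ) (k : ℕ) (v : ℝ → ℝ) (x : ℝ) : ℝ :=
  (-1 : ℝ) ^ k * iteratedDeriv k (Iplus ((k : ℝ) - s) v) x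

/-- Left Riemann-Liouville fractional derivative of order `s ∈ [k-1,k)`. -/
noncomputable def Dminus (s : ℝ) (k : ℕ) (v : ℝ → ℝ) (x : ℝ) : ℝ :=
  iteratedDeriv k (Iminus ((k : ℝ) - s) v) x

/-! Put `t = (x - 1) / 2`. Then `jacobiP a b n` is a polynomial in `t` whose coefficient of `t ^ j`
is `c(n, j) = (n + a + b + 1)_j / j! * (a + j + 1)_(n - j) / (n - j)!`. Multiplied by its
denominator `2 (n + 1) (2n + a + b) (n + a + b + 1)`, the recurrence is a polynomial identity
in `t`, so it suffices to compare coefficients, i.e. to relate `c(n + 1, j)`, `c(n, j)`,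
`c(n, j - 1)` and `c(n - 1, j)`. After multiplying `c(n + 1, j)` by the factor `n + a + b + 1` of
the denominator, `(n + a + b + 2)_j` becomes `(n + a + b + 1)_(j + 1)`, and all four
coefficients are multiples of the same product `(n + a + b + 1)_(j - 1) (a + j + 1)_(n - j - 1)`,
so the comparison is an identity of rational functions, with no division by Pochhammer symbols.
The boundary cases `j = 0, n, n + 1` are the same computation with fewer terms. -/

open Polynomial
open scoped Nat

theorem ascPochhammer_succ_eval_left {S : Type*} [CommSemiring S] (n : ℕ) (x : S) :
    (ascPochhammer S (n + 1)).eval x = x * (ascPochhammer S n).eval (x + 1) := by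
  rw [ascPochhammer_succ_left, eval_mul, eval_X, eval_comp, eval_add, eval_X, eval_one]

theorem ascPochhammer_succ_succ_eval {S : Type*} [Semiring S] (n : ℕ) (x : S) :
    (ascPochhammer S (n + 2)).eval x = (ascPochhammer S n).eval x * (x + n) * (x + (n + 1)) := by
  rw [ascPochhammer_succ_eval, ascPochhammer_succ_eval, Nat.cast_succ, mul_assoc]

section JacobiCoefficients

variable (a b : ℝ)

noncomputable def jacobiCoeff (N j : ℕ) : ℝ :=
  (ascPochhammer ℝ j).eval ((N : ℝ) + a + b + 1) / (j ! : ℝ) *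
    ((ascPochhammer ℝ (N - j)).eval (a + j + 1) / ((N - j)! : ℝ))

-- `x` and `y` are free so that each caller can put the arguments in its own normal form.
theorem jacobiCoeff_eq {N j k : ℕ} {x y : ℝ} (hN : N = j + k) (hx : (N : ℝ) + a + b + 1 = x)
    (hy : a + j + 1 = y) :
    jacobiCoeff a b N j = (ascPochhammer ℝ j).eval x / (j ! : ℝ) *
      ((ascPochhammer ℝ k).eval y / (k ! : ℝ)) := by
  subst hN hx hy
  simp [jacobiCoeff]

theorem mul_jacobiCoeff_succ {N j k : ℕ} {x y : ℝ} (hN : N + 1 = j + k)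
    (hx : (N : ℝ) + a + b + 1 = x) (hy : a + j + 1 = y) :
    ((N : ℝ) + a + b + 1) * jacobiCoeff a b (N + 1) j =
      (ascPochhammer ℝ (j + 1)).eval x / (j ! : ℝ) *
        ((ascPochhammer ℝ k).eval y / (k ! : ℝ)) := by
  rw [jacobiCoeff_eq a b hN (x := x + 1) (by push_cast; linarith) hy,
    ascPochhammer_succ_eval_left, hx]
  ring

/- With `D = jacobiRecDen a b n`, the recurrence coefficients of the statement are
`a_n = jacobiRecA a b n / D`, `b_n = jacobiRecB a b n / D` and `c_n = jacobiRecC a b n / D`. -/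
def jacobiRecDen (n : ℕ) : ℝ := 2 * (n + 1) * (2 * n + a + b) * (n + a + b + 1)
def jacobiRecA (n : ℕ) : ℝ := (2 * n + a + b) * (2 * n + a + b + 1) * (2 * n + a + b + 2)
def jacobiRecB (n : ℕ) : ℝ := (b ^ 2 - a ^ 2) * (2 * n + a + b + 1)
def jacobiRecC (n : ℕ) : ℝ := 2 * (n + a) * (n + b) * (2 * n + a + b + 2)

theorem jacobiCoeff_recurrence_of_lt {i k m : ℕ} (hm : m = i + 1 + k) :
    jacobiRecDen a b (m + 1) * jacobiCoeff a b (m + 2) (i + 1) =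
      (jacobiRecA a b (m + 1) - jacobiRecB a b (m + 1)) * jacobiCoeff a b (m + 1) (i + 1) +
      2 * jacobiRecA a b (m + 1) * jacobiCoeff a b (m + 1) i -
      jacobiRecC a b (m + 1) * jacobiCoeff a b m (i + 1) := by
  subst hm
  set x : ℝ := i + k + a + b + 3
  set y : ℝ := a + i + 2
  rw [jacobiRecDen, mul_assoc,
    mul_jacobiCoeff_succ a b (k := k + 2) (x := x) (y := y) (by omega) (by push_cast; ring)
      (by push_cast; ring),
    jacobiCoeff_eq a b (k := k + 1) (x := x) (y := y) (by omega) (by push_cast; ring)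
      (by push_cast; ring),
    jacobiCoeff_eq a b (k := k + 2) (x := x) (y := y - 1) (by omega) (by push_cast; ring)
      (by ring),
    jacobiCoeff_eq a b (k := k) (x := x - 1) (y := y) (by omega) (by push_cast; ring)
      (by push_cast; ring)]
  have hx_succ : (ascPochhammer ℝ (i + 1)).eval x = (ascPochhammer ℝ i).eval x * (x + i) :=
    ascPochhammer_succ_eval i x
  have hx_pred :
      (ascPochhammer ℝ (i + 1)).eval (x - 1) = (x - 1) * (ascPochhammer ℝ i).eval x := by
    rw [ascPochhammer_succ_eval_left, sub_add_cancel]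
  have hy_succ : (ascPochhammer ℝ (k + 1)).eval y = (ascPochhammer ℝ k).eval y * (y + k) :=
    ascPochhammer_succ_eval k y
  have hy_pred : (ascPochhammer ℝ (k + 2)).eval (y - 1) =
      (y - 1) * ((ascPochhammer ℝ k).eval y * (y + k)) := by
    rw [ascPochhammer_succ_eval_left, sub_add_cancel, hy_succ]
  rw [ascPochhammer_succ_succ_eval, hx_succ, hx_pred, ascPochhammer_succ_succ_eval, hy_succ,
    hy_pred]
  simp only [Nat.factorial_succ, Nat.cast_mul, Nat.cast_add, Nat.cast_one]
  unfold jacobiRecA jacobiRecB jacobiRecC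
  simp only [x, y]
  push_cast
  field_simp
  ring

theorem jacobiCoeff_recurrence_zero (m : ℕ) :
    jacobiRecDen a b (m + 1) * jacobiCoeff a b (m + 2) 0 =
      (jacobiRecA a b (m + 1) - jacobiRecB a b (m + 1)) * jacobiCoeff a b (m + 1) 0 -
      jacobiRecC a b (m + 1) * jacobiCoeff a b m 0 := by
  rw [jacobiRecDen, mul_assoc,
    mul_jacobiCoeff_succ a b (k := m + 2) (x := m + a + b + 2) (y := a + 1) (by omega)
      (by push_cast; ring) (by simp),
    jacobiCoeff_eq a b (k := m + 1) (x := m + a + b + 2) (y := a + 1) (by omega)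
      (by push_cast; ring) (by simp),
    jacobiCoeff_eq a b (k := m) (x := m + a + b + 1) (y := a + 1) (by omega) rfl (by simp),
    ascPochhammer_succ_succ_eval, ascPochhammer_succ_eval m]
  simp only [zero_add, ascPochhammer_one, ascPochhammer_zero, eval_X, eval_one,
    Nat.factorial_succ, Nat.cast_mul, Nat.cast_add, Nat.cast_one]
  unfold jacobiRecA jacobiRecB jacobiRecC
  push_cast
  field_simp
  ring

theorem jacobiCoeff_recurrence_deg (m : ℕ) :
    jacobiRecDen a b (m + 1) * jacobiCoeff a b (m + 2) (m + 1) =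
      (jacobiRecA a b (m + 1) - jacobiRecB a b (m + 1)) * jacobiCoeff a b (m + 1) (m + 1) +
      2 * jacobiRecA a b (m + 1) * jacobiCoeff a b (m + 1) m := by
  rw [jacobiRecDen, mul_assoc,
    mul_jacobiCoeff_succ a b (k := 1) (x := m + a + b + 2) (y := a + m + 2) (by omega)
      (by push_cast; ring) (by push_cast; ring),
    jacobiCoeff_eq a b (k := 0) (x := m + a + b + 2) (y := a + m + 2) (by omega)
      (by push_cast; ring) (by push_cast; ring),
    jacobiCoeff_eq a b (k := 1) (x := m + a + b + 2) (y := a + m + 1) (by omega)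
      (by push_cast; ring) rfl,
    ascPochhammer_succ_succ_eval, ascPochhammer_succ_eval m]
  simp only [ascPochhammer_one, ascPochhammer_zero, eval_X, eval_one,
    Nat.factorial_succ, Nat.factorial_zero, Nat.cast_mul, Nat.cast_add, Nat.cast_one]
  unfold jacobiRecA jacobiRecB
  push_cast
  field_simp
  ring

theorem jacobiCoeff_recurrence_lead (m : ℕ) :
    jacobiRecDen a b (m + 1) * jacobiCoeff a b (m + 2) (m + 2) =
      2 * jacobiRecA a b (m + 1) * jacobiCoeff a b (m + 1) (m + 1) := by
  rw [jacobiRecDen, mul_assoc,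
    mul_jacobiCoeff_succ a b (k := 0) (x := m + a + b + 2) (y := a + m + 3) (by omega)
      (by push_cast; ring) (by push_cast; ring),
    jacobiCoeff_eq a b (k := 0) (x := m + a + b + 2) (y := a + m + 2) (by omega)
      (by push_cast; ring) (by push_cast; ring),
    ascPochhammer_succ_succ_eval]
  simp only [ascPochhammer_zero, eval_one, Nat.factorial_succ, Nat.cast_mul, Nat.cast_add,
    Nat.cast_one]
  unfold jacobiRecA
  push_cast
  field_simp
  ring

noncomputable def jacobiPoly (N : ℕ) : ℝ[X] :=
  ∑ j ∈ range (N + 1), C (jacobiCoeff a b N j) * X ^ j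

theorem jacobiP_eq_eval_jacobiPoly (N : ℕ) (x : ℝ) :
    jacobiP a b N x = (jacobiPoly a b N).eval ((x - 1) / 2) := by
  simp [jacobiP, jacobiPoly, jacobiCoeff, eval_finsetSum]

theorem coeff_jacobiPoly (N j : ℕ) :
    (jacobiPoly a b N).coeff j = if j ≤ N then jacobiCoeff a b N j else 0 := by
  simp [jacobiPoly]

theorem jacobiPoly_recurrence (m : ℕ) :
    C (jacobiRecDen a b (m + 1)) * jacobiPoly a b (m + 2) =
      C (jacobiRecA a b (m + 1) - jacobiRecB a b (m + 1)) * jacobiPoly a b (m + 1) +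
      C (2 * jacobiRecA a b (m + 1)) * (X * jacobiPoly a b (m + 1)) -
      C (jacobiRecC a b (m + 1)) * jacobiPoly a b m := by
  ext j
  rcases j with _ | j
  · simp only [coeff_sub, coeff_add, coeff_C_mul, coeff_X_mul_zero, coeff_jacobiPoly, zero_le,
      if_true, mul_zero, add_zero]
    exact jacobiCoeff_recurrence_zero a b m
  simp only [coeff_sub, coeff_add, coeff_C_mul, coeff_X_mul, coeff_jacobiPoly]
  obtain hj | rfl | rfl | hj : j + 1 ≤ m ∨ j = m ∨ j = m + 1 ∨ m + 2 < j + 1 := by omega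
  · obtain ⟨k, rfl⟩ : ∃ k, m = j + 1 + k := ⟨m - j - 1, by omega⟩
    rw [if_pos (by omega), if_pos (by omega), if_pos (by omega), if_pos (by omega)]
    exact jacobiCoeff_recurrence_of_lt a b rfl
  · rw [if_pos (by omega), if_pos (by omega), if_pos (by omega), if_neg (by omega), mul_zero,
      sub_zero]
    exact jacobiCoeff_recurrence_deg a b _
  · rw [if_pos le_rfl, if_neg (by omega), if_pos le_rfl, if_neg (by omega), mul_zero, mul_zero,
      zero_add, sub_zero]
    exact jacobiCoeff_recurrence_lead a b _
  · rw [if_neg (by omega), if_neg (by omega), if_neg (by omega), if_neg (by omega)]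
    simp

theorem jacobiP_recurrence_cleared {n : ℕ} (hn : 1 ≤ n) (x : ℝ) :
    jacobiRecDen a b n * jacobiP a b (n + 1) x =
      (jacobiRecA a b n * x - jacobiRecB a b n) * jacobiP a b n x -
      jacobiRecC a b n * jacobiP a b (n - 1) x := by
  obtain ⟨m, rfl⟩ : ∃ m, n = m + 1 := ⟨n - 1, by omega⟩
  have h := congrArg (eval ((x - 1) / 2)) (jacobiPoly_recurrence a b m)
  simp only [eval_sub, eval_add, eval_mul, eval_C, eval_X] at h
  simp only [jacobiP_eq_eval_jacobiPoly, Nat.add_sub_cancel]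
  linear_combination h

theorem jacobiP_zero (x : ℝ) : jacobiP a b 0 x = 1 := by
  simp [jacobiP]

theorem jacobiP_one (x : ℝ) : jacobiP a b 1 x = (a + b + 2) * x / 2 + (a - b) / 2 := by
  simp [jacobiP, sum_range_succ]
  ring

end JacobiCoefficients

/-- three-term recurrence for Jacobi polynomials with real parameters. -/
theorem stmt6 (α β : ℝ)
    (hcond : ∀ n : ℕ, 1 ≤ n → ∀ m : ℕ, (n : ℝ) + α + β ≠ -((m : ℝ) + 1)) :
    (∀ n : ℕ, 1 ≤ n → ∀ x : ℝ,
        jacobiP α β (n + 1) x =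
          ((2 * (n : ℝ) + α + β + 1) * (2 * (n : ℝ) + α + β + 2) /
              (2 * ((n : ℝ) + 1) * ((n : ℝ) + α + β + 1)) * x -
            (β ^ 2 - α ^ 2) * (2 * (n : ℝ) + α + β + 1) /
              (2 * ((n : ℝ) + 1) * ((n : ℝ) + α + β + 1) * (2 * (n : ℝ) + α + β))) *
            jacobiP α β n x -
          ((n : ℝ) + α) * ((n : ℝ) + β) * (2 * (n : ℝ) + α + β + 2) /
              (((n : ℝ) + 1) * ((n : ℝ) + α + β + 1) * (2 * (n : ℝ) + α + β)) *
            jacobiP α β (n - 1) x) ∧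
    (∀ x : ℝ, jacobiP α β 0 x = 1) ∧
    (∀ x : ℝ, jacobiP α β 1 x = (α + β + 2) * x / 2 + (α - β) / 2) := by
  refine ⟨fun n hn x => ?_, jacobiP_zero α β, jacobiP_one α β⟩
  have hs : (n : ℝ) + α + β + 1 ≠ 0 := fun h => hcond n hn 0 (by push_cast; linarith)
  have hw : 2 * (n : ℝ) + α + β ≠ 0 := fun h =>
    hcond n hn (n - 1) (by rw [Nat.cast_sub hn, Nat.cast_one]; linarith)
  have hD : jacobiRecDen α β n ≠ 0 := by
    unfold jacobiRecDen
    have : (n : ℝ) + 1 ≠ 0 := by positivity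
    exact mul_ne_zero (mul_ne_zero (mul_ne_zero two_ne_zero this) hw) hs
  rw [← mul_right_inj' hD, jacobiP_recurrence_cleared α β hn x]
  unfold jacobiRecDen jacobiRecA jacobiRecB jacobiRecC
  field_simp
end

section
/- Let μ ∈ (0, 1), ν = 2 − μ, and let f be continuous on [−1, 1]. Define u(x) = I_+^ν f(x) − [I_+^2 f(−1) / (2 Γ(2−μ))] (1−x)^{1−μ} for x ∈ (−1, 1). Then u solves the fractional boundary value problem with integral boundary conditions: D_+^ν u(x) = f(x) for every x ∈ (−1, 1), and I_+^μ u(−1) = I_+^μ u(1) = 0. Moreover, I_+^μ u(x) = I_+^2 f(x) − [I_+^2 f(−1)/2] (1−x) for every x ∈ (−1, 1). -/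
open MeasureTheory Filter Finset

/-! The kernel `(z - y) ^ (1 - μ)` of `I₊^(2-μ)` is bounded, so Fubini on the triangle
`x < y < z ≤ 1` together with the beta integral
`∫ y in x..z, (y - x) ^ (α - 1) * (z - y) ^ (β - 1) = B(α, β) (z - x) ^ (α + β - 1)`
gives the semigroup law `I₊^μ I₊^(2-μ) = I₊^2`, and the same beta integral gives
`I₊^μ (1 - ·) ^ (1 - μ) = Γ(2 - μ) (1 - x)`. Hence
`I₊^μ u = I₊^2 f - I₊^2 f(-1) / 2 · (1 - x)`, which vanishes at both endpoints, and
differentiating `I₊^2 f x = ∫ y in x..1, (y - x) f y` twice gives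
`D₊^(2-μ) u = (I₊^μ u)'' = f`. -/

open Set intervalIntegral ProbabilityTheory Topology

theorem integral_rpow_mul_one_sub_rpow {α β : ℝ} (hα : 0 < α) (hβ : 0 < β) :
    ∫ t in (0 : ℝ)..1, t ^ (α - 1) * (1 - t) ^ (β - 1) = beta α β := by
  have hC : ((∫ t in (0 : ℝ)..1, t ^ (α - 1) * (1 - t) ^ (β - 1) : ℝ) : ℂ) =
      Complex.betaIntegral α β := by
    rw [← integral_ofReal, Complex.betaIntegral]
    refine integral_congr fun t ht => ?_
    rw [Set.uIcc_of_le zero_le_one] at ht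
    push_cast
    rw [Complex.ofReal_cpow ht.1, Complex.ofReal_cpow (sub_nonneg.2 ht.2)]
    push_cast
    rfl
  rw [beta_eq_betaIntegralReal α β hα hβ, ← hC, Complex.ofReal_re]

theorem integral_sub_rpow_mul_sub_rpow {α β x z : ℝ} (hα : 0 < α) (hβ : 0 < β)
    (hxz : x < z) :
    ∫ y in x..z, (y - x) ^ (α - 1) * (z - y) ^ (β - 1) =
      beta α β * (z - x) ^ (α + β - 1) := by
  have hzx : 0 < z - x := sub_pos.2 hxz
  have hsub := integral_comp_mul_add (a := 0) (b := 1)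
    (fun y => (y - x) ^ (α - 1) * (z - y) ^ (β - 1)) hzx.ne' x
  simp only [mul_zero, mul_one, zero_add, sub_add_cancel, smul_eq_mul] at hsub
  rw [← mul_inv_cancel_left₀ hzx.ne' (∫ y in x..z, _), ← hsub,
    ← integral_rpow_mul_one_sub_rpow hα hβ, mul_comm, ← intervalIntegral.integral_mul_const,
    ← intervalIntegral.integral_mul_const]
  refine integral_congr fun t ht => ?_
  rw [Set.uIcc_of_le zero_le_one] at ht
  rw [add_sub_cancel_right, show z - ((z - x) * t + x) = (z - x) * (1 - t) by ring,
    Real.mul_rpow hzx.le ht.1, Real.mul_rpow hzx.le (sub_nonneg.2 ht.2),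
    show α + β - 1 = 1 + (α - 1) + (β - 1) by ring, Real.rpow_add hzx, Real.rpow_add hzx,
    Real.rpow_one]
  ring

theorem intervalIntegrable_sub_rpow_mul_sub_rpow {α β x z : ℝ} (hα : 0 < α) (hβ : 0 < β)
    (hxz : x < z) :
    IntervalIntegrable (fun y => (y - x) ^ (α - 1) * (z - y) ^ (β - 1)) volume x z :=
  intervalIntegrable_of_integral_ne_zero <| by
    rw [integral_sub_rpow_mul_sub_rpow hα hβ hxz]
    exact (mul_pos (beta_pos hα hβ) (Real.rpow_pos_of_pos (sub_pos.2 hxz) _)).ne'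

theorem integrableOn_sub_rpow {α x b : ℝ} (hα : 0 < α) (hxb : x ≤ b) :
    IntegrableOn (fun y => (y - x) ^ (α - 1)) (Ioc x b) := by
  have h := (intervalIntegral.intervalIntegrable_rpow' (a := 0) (b := b - x) (r := α - 1)
    (by linarith)).comp_sub_right x
  rw [zero_add, sub_add_cancel] at h
  exact (intervalIntegrable_iff_integrableOn_Ioc_of_le hxb).mp h

section Iplus

variable {ρ x : ℝ} {v w : ℝ → ℝ}

theorem Iplus_congr (h : EqOn v w (Icc x 1)) (hx : x ≤ 1) : Iplus ρ v x = Iplus ρ w x := by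
  unfold Iplus
  congr 1
  exact integral_congr fun y hy => by rw [h (Set.uIcc_of_le hx ▸ hy)]

theorem Iplus_sub (hv : IntervalIntegrable (fun y => (y - x) ^ (ρ - 1) * v y) volume x 1)
    (hw : IntervalIntegrable (fun y => (y - x) ^ (ρ - 1) * w y) volume x 1) :
    Iplus ρ (fun y => v y - w y) x = Iplus ρ v x - Iplus ρ w x := by
  simp only [Iplus, mul_sub, integral_sub hv hw]

theorem Iplus_const_mul (c : ℝ) : Iplus ρ (fun y => c * v y) x = c * Iplus ρ v x := by
  simp only [Iplus, mul_left_comm _ c, intervalIntegral.integral_const_mul]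

theorem Iplus_one_sub_rpow {α β : ℝ} (hα : 0 < α) (hβ : 0 < β) (hx : x < 1) :
    Iplus α (fun y => (1 - y) ^ (β - 1)) x =
      Real.Gamma β / Real.Gamma (α + β) * (1 - x) ^ (α + β - 1) := by
  rw [Iplus, integral_sub_rpow_mul_sub_rpow hα hβ hx, beta]
  field_simp [(Real.Gamma_pos_of_pos hα).ne']

theorem Iplus_two : Iplus 2 v x = ∫ y in x..1, (y - x) * v y := by
  norm_num [Iplus, Real.Gamma_two]

end Iplus

section Derivatives

variable {g : ℝ → ℝ}

theorem hasDerivAt_integral_to_one (hg : Continuous g) (x : ℝ) :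
    HasDerivAt (fun t => ∫ y in t..1, g y) (-g x) x :=
  integral_hasDerivAt_left (hg.intervalIntegrable _ _) (hg.stronglyMeasurableAtFilter _ _)
    hg.continuousAt

theorem hasDerivAt_Iplus_two (hg : Continuous g) (x : ℝ) :
    HasDerivAt (Iplus 2 g) (-∫ y in x..1, g y) x := by
  have hsplit : Iplus 2 g = fun t => (∫ y in t..1, y * g y) - t * ∫ y in t..1, g y := by
    funext t
    rw [Iplus_two, ← intervalIntegral.integral_const_mul,
      ← integral_sub ((by fun_prop : Continuous fun y => y * g y).intervalIntegrable _ _)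
        ((by fun_prop : Continuous fun y => t * g y).intervalIntegrable _ _)]
    exact integral_congr fun y _ => by ring
  rw [hsplit]
  exact ((hasDerivAt_integral_to_one (continuous_id.mul hg) x).sub
    ((hasDerivAt_id x).mul (hasDerivAt_integral_to_one hg x))).congr_deriv (by simp)

theorem iteratedDeriv_two_Iplus_two_sub_mul (hg : Continuous g) (c x : ℝ) :
    iteratedDeriv 2 (fun t => Iplus 2 g t - c * (1 - t)) x = g x := by
  have hderiv : deriv (fun t => Iplus 2 g t - c * (1 - t)) = fun t => c - ∫ y in t..1, g y :=
    funext fun t => ((hasDerivAt_Iplus_two hg t).sub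
      (((hasDerivAt_id t).const_sub 1).const_mul c)).deriv.trans (by ring)
  rw [iteratedDeriv_succ, iteratedDeriv_one, hderiv]
  exact ((hasDerivAt_integral_to_one hg x).const_sub c).deriv.trans (neg_neg _)

end Derivatives

noncomputable def iteratedIplusKernel (α β x : ℝ) (g : ℝ → ℝ) : ℝ × ℝ → ℝ :=
  {p : ℝ × ℝ | p.1 < p.2}.indicator fun p =>
    (p.1 - x) ^ (α - 1) * ((p.2 - p.1) ^ (β - 1) * g p.2)

section Composition

variable {α β x : ℝ} {g : ℝ → ℝ}

theorem integrable_iteratedIplusKernel (hα : 0 < α) (hβ : 1 ≤ β) (hg : Continuous g)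
    (hx : x ≤ 1) :
    Integrable (iteratedIplusKernel α β x g)
      ((volume.restrict (Ioc x 1)).prod (volume.restrict (Ioc x 1))) := by
  obtain ⟨M, hM⟩ := isCompact_Icc.exists_bound_of_continuousOn (hg.continuousOn (s := Icc x 1))
  have hdom : Integrable (fun p : ℝ × ℝ => (p.1 - x) ^ (α - 1) * ((1 - x) ^ (β - 1) * M))
      ((volume.restrict (Ioc x 1)).prod (volume.restrict (Ioc x 1))) :=
    (integrableOn_sub_rpow hα hx).mul_prod (integrableOn_const measure_Ioc_lt_top.ne)
  have hmeas : Measurable (iteratedIplusKernel α β x g) :=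
    (by fun_prop : Measurable fun p : ℝ × ℝ =>
      (p.1 - x) ^ (α - 1) * ((p.2 - p.1) ^ (β - 1) * g p.2)).indicator
        (measurableSet_lt measurable_fst measurable_snd)
  refine hdom.mono' hmeas.aestronglyMeasurable ?_
  rw [Measure.prod_restrict]
  filter_upwards [ae_restrict_mem (measurableSet_Ioc.prod measurableSet_Ioc)]
    with ⟨y, z⟩ ⟨⟨hxy, hy1⟩, ⟨hxz, hz1⟩⟩
  have hyx : 0 ≤ y - x := by linarith
  by_cases hyz : y < z
  · have hzy : 0 ≤ z - y := by linarith
    simp only [iteratedIplusKernel,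
      indicator_of_mem (show (y, z) ∈ {p : ℝ × ℝ | p.1 < p.2} from hyz), norm_mul,
      Real.norm_eq_abs, abs_of_nonneg (Real.rpow_nonneg hyx _),
      abs_of_nonneg (Real.rpow_nonneg hzy _)]
    gcongr
    exact Real.norm_eq_abs _ ▸ hM z ⟨hxz.le, hz1⟩
  · simp only [iteratedIplusKernel,
      indicator_of_notMem (show (y, z) ∉ {p : ℝ × ℝ | p.1 < p.2} from hyz), norm_zero]
    have := (norm_nonneg _).trans (hM x ⟨le_rfl, hx⟩)
    positivity

theorem setIntegral_iteratedIplusKernel_right {y : ℝ} (hy : y ∈ Ioc x 1) :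
    ∫ z in Ioc x 1, iteratedIplusKernel α β x g (y, z) =
      (y - x) ^ (α - 1) * ∫ z in y..1, (z - y) ^ (β - 1) * g z := by
  have hK : (fun z => iteratedIplusKernel α β x g (y, z)) =
      (Ioi y).indicator fun z => (y - x) ^ (α - 1) * ((z - y) ^ (β - 1) * g z) := by
    funext z
    by_cases hz : y < z <;> simp [iteratedIplusKernel, hz]
  rw [hK, MeasureTheory.integral_indicator measurableSet_Ioi,
    Measure.restrict_restrict measurableSet_Ioi, Set.inter_comm,
    Ioc_inter_Ioi, max_eq_right hy.1.le, MeasureTheory.integral_const_mul,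
    intervalIntegral.integral_of_le hy.2]

theorem setIntegral_iteratedIplusKernel_left (hα : 0 < α) (hβ : 0 < β) {z : ℝ}
    (hz : z ∈ Ioc x 1) :
    ∫ y in Ioc x 1, iteratedIplusKernel α β x g (y, z) =
      beta α β * ((z - x) ^ (α + β - 1) * g z) := by
  have hK : (fun y => iteratedIplusKernel α β x g (y, z)) =
      (Iio z).indicator fun y => (y - x) ^ (α - 1) * (z - y) ^ (β - 1) * g z := by
    funext y
    by_cases hy : y < z <;> simp [iteratedIplusKernel, hy, mul_assoc]
  have hset : Iio z ∩ Ioc x 1 = Ioo x z := by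
    ext y
    simp only [Set.mem_inter_iff, Set.mem_Iio, Set.mem_Ioc, Set.mem_Ioo]
    exact ⟨fun h => ⟨h.2.1, h.1⟩, fun h => ⟨h.2, h.1, h.2.le.trans hz.2⟩⟩
  rw [hK, MeasureTheory.integral_indicator measurableSet_Iio,
    Measure.restrict_restrict measurableSet_Iio, hset,
    ← integral_Ioc_eq_integral_Ioo, ← intervalIntegral.integral_of_le hz.1.le,
    intervalIntegral.integral_mul_const, integral_sub_rpow_mul_sub_rpow hα hβ hz.1, mul_assoc]

theorem intervalIntegrable_rpow_mul_Iplus (hα : 0 < α) (hβ : 1 ≤ β) (hg : Continuous g)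
    (hx : x ≤ 1) :
    IntervalIntegrable (fun y => (y - x) ^ (α - 1) * Iplus β g y) volume x 1 := by
  rw [intervalIntegrable_iff_integrableOn_Ioc_of_le hx]
  refine ((integrable_iteratedIplusKernel hα hβ hg hx).integral_prod_left.const_mul
    (1 / Real.Gamma β)).congr ?_
  filter_upwards [ae_restrict_mem measurableSet_Ioc] with y hy
  rw [setIntegral_iteratedIplusKernel_right hy, Iplus]
  ring

theorem Iplus_Iplus (hα : 0 < α) (hβ : 1 ≤ β) (hg : Continuous g) (hx : x ≤ 1) :
    Iplus α (Iplus β g) x = Iplus (α + β) g x := by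
  have hswap := integral_integral_swap (f := fun y z => iteratedIplusKernel α β x g (y, z))
    (integrable_iteratedIplusKernel hα hβ hg hx)
  calc Iplus α (Iplus β g) x
      = 1 / Real.Gamma α * (1 / Real.Gamma β) *
          ∫ y in Ioc x 1, ∫ z in Ioc x 1, iteratedIplusKernel α β x g (y, z) := by
        rw [Iplus, intervalIntegral.integral_of_le hx, mul_assoc]
        congr 1
        rw [← MeasureTheory.integral_const_mul]
        refine setIntegral_congr_fun measurableSet_Ioc fun y hy => ?_
        rw [setIntegral_iteratedIplusKernel_right hy, Iplus]
        ring
    _ = 1 / Real.Gamma α * (1 / Real.Gamma β) *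
          ∫ z in Ioc x 1, ∫ y in Ioc x 1, iteratedIplusKernel α β x g (y, z) := by
        rw [hswap]
    _ = 1 / Real.Gamma α * (1 / Real.Gamma β) *
          (beta α β * ∫ z in x..1, (z - x) ^ (α + β - 1) * g z) := by
        congr 1
        rw [intervalIntegral.integral_of_le hx, ← MeasureTheory.integral_const_mul]
        exact setIntegral_congr_fun measurableSet_Ioc fun z hz =>
          setIntegral_iteratedIplusKernel_left hα (by linarith) hz
    _ = Iplus (α + β) g x := by
        rw [Iplus, beta]
        field_simp [(Real.Gamma_pos_of_pos hα).ne',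
          (Real.Gamma_pos_of_pos (by linarith : 0 < β)).ne']

theorem Iplus_Iplus_sub_mul_one_sub_rpow {c : ℝ} (hα : 0 < α) (hβ : 1 ≤ β)
    (hg : Continuous g) (hx : x < 1) :
    Iplus α (fun y => Iplus β g y - c * (1 - y) ^ (β - 1)) x =
      Iplus (α + β) g x -
        c * (Real.Gamma β / Real.Gamma (α + β)) * (1 - x) ^ (α + β - 1) := by
  have hβ0 : 0 < β := by linarith
  have hint :
      IntervalIntegrable (fun y => (y - x) ^ (α - 1) * (c * (1 - y) ^ (β - 1))) volume x 1 := by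
    simpa only [mul_left_comm] using
      (intervalIntegrable_sub_rpow_mul_sub_rpow hα hβ0 hx).const_mul c
  rw [Iplus_sub (intervalIntegrable_rpow_mul_Iplus hα hβ hg hx.le) hint, Iplus_const_mul,
    Iplus_Iplus hα hβ hg hx.le, Iplus_one_sub_rpow hα hβ0 hx, mul_assoc]

end Composition

/-- solution formula (5.13)-(5.14) of the fractional boundary value
problem with integral boundary conditions. -/
theorem stmt17 (μ : ℝ) (hμ : μ ∈ Set.Ioo (0 : ℝ) 1) (f : ℝ → ℝ)
    (hf : ContinuousOn f (Set.Icc (-1) 1)) :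
    ∀ u : ℝ → ℝ,
      (∀ x : ℝ, u x =
        Iplus (2 - μ) f x - Iplus 2 f (-1) / (2 * Real.Gamma (2 - μ)) * (1 - x) ^ (1 - μ)) →
      (∀ x ∈ Set.Ioo (-1 : ℝ) 1, Dplus (2 - μ) 2 u x = f x) ∧
      Iplus μ u (-1) = 0 ∧ Iplus μ u 1 = 0 ∧
      (∀ x ∈ Set.Ioo (-1 : ℝ) 1,
        Iplus μ u x = Iplus 2 f x - Iplus 2 f (-1) / 2 * (1 - x)) := by
  obtain ⟨hμ0, hμ1⟩ := hμ
  intro u hu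
  obtain ⟨g, hg, hfg⟩ : ∃ g : ℝ → ℝ, Continuous g ∧ EqOn f g (Set.Icc (-1) 1) :=
    ⟨IccExtend (by norm_num) ((Set.Icc (-1) 1).domRestrict f), hf.domRestrict.Icc_extend',
      fun y hy => by rw [IccExtend_of_mem _ _ hy]; rfl⟩
  have hfg_of_le {x : ℝ} (hx : -1 ≤ x) : EqOn f g (Set.Icc x 1) :=
    hfg.mono (Icc_subset_Icc_left hx)
  have key : ∀ x ∈ Set.Ico (-1 : ℝ) 1,
      Iplus μ u x = Iplus 2 g x - Iplus 2 f (-1) / 2 * (1 - x) := by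
    intro x hx
    have hu_g : EqOn u (fun y => Iplus (2 - μ) g y -
        Iplus 2 f (-1) / (2 * Real.Gamma (2 - μ)) * (1 - y) ^ (2 - μ - 1)) (Set.Icc x 1) :=
      fun y hy => by
        rw [hu, Iplus_congr (hfg_of_le (hx.1.trans hy.1)) hy.2, show 2 - μ - 1 = 1 - μ by ring]
    rw [Iplus_congr hu_g hx.2.le, Iplus_Iplus_sub_mul_one_sub_rpow hμ0 (by linarith) hg hx.2,
      add_sub_cancel, Real.Gamma_two, show (2 : ℝ) - 1 = 1 by norm_num, Real.rpow_one]
    field_simp [(Real.Gamma_pos_of_pos (by linarith : (0 : ℝ) < 2 - μ)).ne']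
  refine ⟨fun x hx => ?_, ?_, by simp [Iplus], fun x hx => ?_⟩
  · have hloc : Iplus μ u =ᶠ[𝓝 x] fun t => Iplus 2 g t - Iplus 2 f (-1) / 2 * (1 - t) :=
      eventually_of_mem (Ioo_mem_nhds hx.1 hx.2) fun t ht => key t ⟨ht.1.le, ht.2⟩
    rw [Dplus, show ((2 : ℕ) : ℝ) - (2 - μ) = μ by push_cast; ring, hloc.iteratedDeriv_eq,
      iteratedDeriv_two_Iplus_two_sub_mul hg, hfg ⟨hx.1.le, hx.2.le⟩]
    norm_num
  · rw [key (-1) ⟨le_rfl, by norm_num⟩, Iplus_congr (hfg_of_le le_rfl) (by norm_num)]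
    ring
  · rw [key x ⟨hx.1.le, hx.2⟩, Iplus_congr (hfg_of_le hx.1.le) hx.2.le]
end
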